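/- Let d = 2 and define the linear maps E₀(ρ) = Tr(ρ)|0⟩⟨0|, F(ρ) = ⟨0|ρ|0⟩ · 𝟙/2, and their composition G = E₀ ∘ F, which satisfies G(ρ) = ⟨0|ρ|0⟩ |0⟩⟨0|. Then u(E₀) = 0 and u(F) = 0, but u(G) = 1/12; in particular, the unitarity is not monotone under composition of maps. -/

import Mathlib

open Matrix Kronecker ComplexOrder MeasureTheory

/-- `d×d` complex matrices. -/
abbrev Mat (d : ℕ) := Matrix (Fin d) (Fin d) ℂ

/-- Matrices on `ℂ^d ⊗ ℂ^d`. -/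
abbrev Mat2 (d : ℕ) := Matrix (Fin d × Fin d) (Fin d × Fin d) ℂ

noncomputable instance matMeasurableSpace {m n : Type*} : MeasurableSpace (Matrix m n ℂ) :=
  borel _

variable {d : ℕ}

/-- Liouville representation of a linear map in the basis `A`:
`𝓔_{kl} = Tr((A k)† E (A l))`. -/
noncomputable def Liou (A : Fin (d ^ 2) → Mat d) (E : Mat d →ₗ[ℂ] Mat d) :
    Matrix (Fin (d ^ 2)) (Fin (d ^ 2)) ℂ :=
  Matrix.of fun k l => Matrix.trace ((A k)ᴴ * E (A l))

/-- The unitarity `u(E) = Tr(𝓔ᵤ† 𝓔ᵤ)/(d²-1)`, where `𝓔ᵤ` is the lower-right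
`(d²-1)×(d²-1)` (unital) block of the Liouville representation. -/
noncomputable def unitarity (A : Fin (d ^ 2) → Mat d) (E : Mat d →ₗ[ℂ] Mat d) : ℝ :=
  (∑ k ∈ Finset.univ.filter (fun k : Fin (d ^ 2) => (k : ℕ) ≠ 0),
    ∑ l ∈ Finset.univ.filter (fun l : Fin (d ^ 2) => (l : ℕ) ≠ 0),
      ‖Liou A E k l‖ ^ 2) / ((d : ℝ) ^ 2 - 1)

/-- `‖𝓔ₙ‖²`: squared Frobenius norm of the nonunital (bottom-left) column block. -/
noncomputable def nSq (A : Fin (d ^ 2) → Mat d) (E : Mat d →ₗ[ℂ] Mat d) : ℝ :=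
  ∑ k ∈ Finset.univ.filter (fun k : Fin (d ^ 2) => (k : ℕ) ≠ 0),
    ∑ l ∈ Finset.univ.filter (fun l : Fin (d ^ 2) => (l : ℕ) = 0),
      ‖Liou A E k l‖ ^ 2

/-- `‖𝓔_sdl‖²`: squared Frobenius norm of the state-dependent-leakage (top-right) row block. -/
noncomputable def sdlSq (A : Fin (d ^ 2) → Mat d) (E : Mat d →ₗ[ℂ] Mat d) : ℝ :=
  ∑ k ∈ Finset.univ.filter (fun k : Fin (d ^ 2) => (k : ℕ) = 0),
    ∑ l ∈ Finset.univ.filter (fun l : Fin (d ^ 2) => (l : ℕ) ≠ 0),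
      ‖Liou A E k l‖ ^ 2

/-- The average survival rate `S(E) = Tr(E(𝟙))/d` (real part). -/
noncomputable def survival (d : ℕ) (E : Mat d →ₗ[ℂ] Mat d) : ℝ :=
  (Matrix.trace (E 1)).re / d

/-- The swap operator `S` on `ℂ^d ⊗ ℂ^d`, `S(x⊗y) = y⊗x`. -/
def swap (d : ℕ) : Mat2 d :=
  Matrix.of fun p q => if p.1 = q.2 ∧ p.2 = q.1 then 1 else 0

/-- The Choi matrix `∑_{j,k} E(|j⟩⟨k|) ⊗ |j⟩⟨k|`. -/
noncomputable def choi (E : Mat d →ₗ[ℂ] Mat d) : Mat2 d :=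
  Matrix.of fun p q => E (Matrix.single p.2 q.2 1) p.1 q.1

/-- Complete positivity: the Choi matrix is positive semidefinite. -/
def IsCP (E : Mat d →ₗ[ℂ] Mat d) : Prop := (choi E).PosSemidef

/-- Trace preserving. -/
def IsTP (E : Mat d →ₗ[ℂ] Mat d) : Prop := ∀ X : Mat d, (E X).trace = X.trace

/-- Trace nonincreasing on positive semidefinite inputs (with the complex order). -/
def IsTNI (E : Mat d →ₗ[ℂ] Mat d) : Prop :=
  ∀ ρ : Mat d, ρ.PosSemidef → (E ρ).trace ≤ ρ.trace

/-- Hermiticity preserving. -/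
def IsHermPreserving (E : Mat d →ₗ[ℂ] Mat d) : Prop := ∀ X : Mat d, E Xᴴ = (E X)ᴴ

/-- The induced map `E ⊗ F` on `M_{d²}(ℂ) = M_d(ℂ) ⊗ M_d(ℂ)`; it is the unique
linear map satisfying `(E ⊗ F)(A ⊗ₖ B) = E(A) ⊗ₖ F(B)`. -/
noncomputable def tensorMap (E F : Mat d →ₗ[ℂ] Mat d) : Mat2 d →ₗ[ℂ] Mat2 d where
  toFun X := Matrix.of fun p q =>
    ∑ i : Fin d, ∑ j : Fin d, ∑ k : Fin d, ∑ l : Fin d,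
      X (i, k) (j, l) *
        (E (Matrix.single i j 1) p.1 q.1 * F (Matrix.single k l 1) p.2 q.2)
  map_add' X Y := by
    ext p q
    simp [Matrix.add_apply, add_mul, Finset.sum_add_distrib]
  map_smul' c X := by
    ext p q
    simp [Matrix.smul_apply, Finset.mul_sum, smul_eq_mul, mul_assoc]

/-- Conjugation `ρ ↦ U ρ Uᴴ` as a linear map. -/
noncomputable def conjMap (U : Mat d) : Mat d →ₗ[ℂ] Mat d :=
  LinearMap.mulLeft ℂ U ∘ₗ LinearMap.mulRight ℂ Uᴴ

/-- `B₁ = 𝟙_{d²}/d`. -/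
noncomputable def B1 (d : ℕ) : Mat2 d := ((d : ℂ))⁻¹ • 1

/-- `B₂ = (S - 𝟙_{d²}/d)/√(d²-1)`. -/
noncomputable def B2 (d : ℕ) : Mat2 d :=
  ((Real.sqrt ((d : ℝ) ^ 2 - 1) : ℂ))⁻¹ • (swap d - ((d : ℂ))⁻¹ • 1)

/-- The 2×2 matrix `M(E)` with entries `M_{ij} = Tr[Bᵢ† (E⊗E)(Bⱼ)]`. -/
noncomputable def Mmat (E : Mat d →ₗ[ℂ] Mat d) : Matrix (Fin 2) (Fin 2) ℂ :=
  Matrix.of fun i j =>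
    Matrix.trace ((![B1 d, B2 d] i)ᴴ * tensorMap E E (![B1 d, B2 d] j))

/-- Auxiliary: interleave noise `E` and unitary conjugations along a list. -/
noncomputable def seqAux (E : Mat d →ₗ[ℂ] Mat d) : List (Mat d) → Mat d → Mat d
  | [], σ => σ
  | U :: rest, σ => seqAux E rest (U * E σ * Uᴴ)

/-- The output state `(𝓤_{j_m} ∘ E ∘ 𝓤_{j_{m-1}} ∘ E ∘ ⋯ ∘ E ∘ 𝓤_{j_1})(ρ)` for the
sequence of unitaries given by the list (head applied first). -/
noncomputable def seqState (E : Mat d →ₗ[ℂ] Mat d) : List (Mat d) → Mat d → Mat d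
  | [], ρ => ρ
  | U :: rest, ρ => seqAux E rest (U * ρ * Uᴴ)

/-- The state-preparation map `E₀(ρ) = Tr(ρ)|0⟩⟨0|` on qubits. -/
noncomputable def Ezero : Mat 2 →ₗ[ℂ] Mat 2 :=
  (Matrix.traceLinearMap (Fin 2) ℂ ℂ).smulRight (Matrix.single 0 0 1)

/-- The map `F(ρ) = ⟨0|ρ|0⟩ · 𝟙/2` on qubits (i.e. `(1/2)E₀†`). -/
noncomputable def Fhalf : Mat 2 →ₗ[ℂ] Mat 2 where
  toFun ρ := ρ 0 0 • ((2 : ℂ)⁻¹ • (1 : Mat 2))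
  map_add' ρ σ := by simp [Matrix.add_apply, add_smul]
  map_smul' c ρ := by simp [Matrix.smul_apply, smul_smul, mul_assoc]

/-! All three maps have rank one, `E ρ = φ ρ • B`, so the Liouville matrix factorises as
`𝓔_{kl} = φ(A_l) ⟨A_k, B⟩` and the unital block has squared Frobenius norm
`(∑_{k≠0} |⟨A_k, B⟩|²)(∑_{l≠0} |φ(A_l)|²)`. For `E₀` the functional `φ = Tr` kills the
traceless `A_l`; for `F` the output `B = 𝟙/2` is orthogonal to them. For `G` both factors equal
`∑_{k≠0} |(A_k)₀₀|²`, which is `‖|0⟩⟨0|‖² - |1/√2|² = 1 - 1/2` by Parseval, so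
`u(G) = (1/2)²/3`. -/

section HilbertSchmidt

variable {ι n : Type*} [Fintype ι] [DecidableEq ι] [Fintype n] {A : ι → Matrix n n ℂ}

theorem trace_conjTranspose_mul_eq_star (X Y : Matrix n n ℂ) :
    trace (Xᴴ * Y) = star (trace (Yᴴ * X)) := by
  rw [← trace_conjTranspose, conjTranspose_mul, conjTranspose_conjTranspose]

theorem eq_sum_trace_conjTranspose_mul_smul
    (horth : ∀ k l, trace ((A k)ᴴ * A l) = if k = l then 1 else 0)
    (hspan : Submodule.span ℂ (Set.range A) = ⊤) (X : Matrix n n ℂ) :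
    X = ∑ k, trace ((A k)ᴴ * X) • A k := by
  obtain ⟨a, rfl⟩ :=
    (Submodule.mem_span_range_iff_exists_fun ℂ).mp (hspan ▸ Submodule.mem_top (x := X))
  have hcoeff : ∀ k, trace ((A k)ᴴ * ∑ l, a l • A l) = a k := fun k => by
    simp [Matrix.mul_sum, trace_sum, horth]
  simp only [hcoeff]

theorem sum_norm_sq_trace_conjTranspose_mul
    (horth : ∀ k l, trace ((A k)ᴴ * A l) = if k = l then 1 else 0)
    (hspan : Submodule.span ℂ (Set.range A) = ⊤) (X : Matrix n n ℂ) :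
    ((∑ k, ‖trace ((A k)ᴴ * X)‖ ^ 2 : ℝ) : ℂ) = trace (Xᴴ * X) := by
  calc ((∑ k, ‖trace ((A k)ᴴ * X)‖ ^ 2 : ℝ) : ℂ)
      = ∑ k, trace ((A k)ᴴ * X) * star (trace ((A k)ᴴ * X)) := by
        push_cast
        exact Finset.sum_congr rfl fun k _ => (Complex.mul_conj' _).symm
    _ = trace (Xᴴ * ∑ k, trace ((A k)ᴴ * X) • A k) := by
        simp only [Matrix.mul_sum, Matrix.mul_smul, trace_sum, trace_smul, smul_eq_mul,
          trace_conjTranspose_mul_eq_star X]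
    _ = trace (Xᴴ * X) := by rw [← eq_sum_trace_conjTranspose_mul_smul horth hspan X]

theorem trace_conjTranspose_mul_single_one [DecidableEq n] (X : Matrix n n ℂ) (i j : n) :
    trace (Xᴴ * single i j 1) = star (X i j) := by
  rw [trace_mul_single, MulOpposite.op_one, one_smul, conjTranspose_apply]

theorem trace_eq_zero_of_trace_smul_one_mul_eq_zero [DecidableEq n] {c : ℂ} (hc : c ≠ 0)
    {X : Matrix n n ℂ} (h : trace ((c • (1 : Matrix n n ℂ))ᴴ * X) = 0) : trace X = 0 := by
  simpa [hc] using h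

end HilbertSchmidt

theorem Liou_of_forall_eq_smul {A : Fin (d ^ 2) → Mat d} {E : Mat d →ₗ[ℂ] Mat d}
    {φ : Mat d → ℂ} {B : Mat d} (hE : ∀ ρ, E ρ = φ ρ • B) (k l : Fin (d ^ 2)) :
    Liou A E k l = φ (A l) * trace ((A k)ᴴ * B) := by
  rw [Liou, of_apply, hE, Matrix.mul_smul, trace_smul, smul_eq_mul]

theorem unitarity_of_forall_eq_smul {A : Fin (d ^ 2) → Mat d} {E : Mat d →ₗ[ℂ] Mat d}
    {φ : Mat d → ℂ} {B : Mat d} (hE : ∀ ρ, E ρ = φ ρ • B) :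
    unitarity A E =
      (∑ k ∈ Finset.univ.filter (fun k : Fin (d ^ 2) => (k : ℕ) ≠ 0), ‖trace ((A k)ᴴ * B)‖ ^ 2) *
      (∑ l ∈ Finset.univ.filter (fun l : Fin (d ^ 2) => (l : ℕ) ≠ 0), ‖φ (A l)‖ ^ 2) /
        ((d : ℝ) ^ 2 - 1) := by
  simp only [unitarity, Liou_of_forall_eq_smul hE, norm_mul, mul_pow, Finset.sum_mul_sum]
  simp only [mul_comm]

theorem Finset.sum_filter_val_ne_zero_eq_sub {M : Type*} [AddCommGroup M] {m : ℕ} [NeZero m]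
    (f : Fin m → M) :
    ∑ k ∈ Finset.univ.filter (fun k : Fin m => (k : ℕ) ≠ 0), f k = ∑ k, f k - f 0 := by
  rw [← Finset.sum_erase_eq_sub (Finset.mem_univ 0)]
  congr 1
  ext k
  simp only [Finset.mem_filter, Finset.mem_univ, true_and, Finset.mem_erase, ne_eq, and_true]
  exact not_congr Fin.val_eq_zero_iff

theorem Ezero_apply (ρ : Mat 2) : Ezero ρ = trace ρ • single 0 0 1 := rfl

theorem Fhalf_apply (ρ : Mat 2) : Fhalf ρ = ρ 0 0 • ((2 : ℂ)⁻¹ • (1 : Mat 2)) := rfl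

theorem Ezero_comp_Fhalf_apply (ρ : Mat 2) :
    (Ezero ∘ₗ Fhalf) ρ = ρ 0 0 • single 0 0 1 := by
  simp [Ezero_apply, Fhalf_apply, smul_smul]

section QubitBasis

variable {A : Fin (2 ^ 2) → Mat 2}
  (horth : ∀ k l : Fin (2 ^ 2), Matrix.trace ((A k)ᴴ * A l) = if k = l then 1 else 0)
  (hA0 : ∀ k : Fin (2 ^ 2), (k : ℕ) = 0 → A k = ((Real.sqrt 2 : ℝ) : ℂ)⁻¹ • 1)
include horth hA0

theorem trace_eq_zero_of_val_ne_zero {l : Fin (2 ^ 2)} (hl : (l : ℕ) ≠ 0) : trace (A l) = 0 := by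
  have h := horth 0 l
  rw [if_neg (fun h0 => hl (by rw [← h0]; rfl)), hA0 0 rfl] at h
  exact trace_eq_zero_of_trace_smul_one_mul_eq_zero (by simp) h

theorem sum_filter_norm_sq_apply_zero_zero (hspan : Submodule.span ℂ (Set.range A) = ⊤) :
    ∑ k ∈ Finset.univ.filter (fun k : Fin (2 ^ 2) => (k : ℕ) ≠ 0), ‖A k 0 0‖ ^ 2 = 1 / 2 := by
  have hpars := sum_norm_sq_trace_conjTranspose_mul horth hspan (single 0 0 1)
  simp only [trace_conjTranspose_mul_single_one, norm_star, single_apply_same, star_one]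
    at hpars
  have hA000 : ‖A 0 0 0‖ ^ 2 = 1 / 2 := by
    simp [hA0 0 rfl]
  have hsum : ∑ k, ‖A k 0 0‖ ^ 2 = 1 := by exact_mod_cast hpars
  rw [Finset.sum_filter_val_ne_zero_eq_sub, hsum, hA000]
  norm_num

end QubitBasis

/-- The composition `G = E₀ ∘ F` satisfies `G(ρ) = ⟨0|ρ|0⟩ |0⟩⟨0|`,
and `u(E₀) = 0`, `u(F) = 0`, but `u(G) = 1/12`: the unitarity is not monotone under
composition. -/
theorem statement_17
    (A : Fin (2 ^ 2) → Mat 2)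
    (horth : ∀ k l : Fin (2 ^ 2), Matrix.trace ((A k)ᴴ * A l) = if k = l then 1 else 0)
    (hspan : Submodule.span ℂ (Set.range A) = ⊤)
    (hA0 : ∀ k : Fin (2 ^ 2), (k : ℕ) = 0 → A k = ((Real.sqrt 2 : ℝ) : ℂ)⁻¹ • 1) :
    (∀ ρ : Mat 2, (Ezero ∘ₗ Fhalf) ρ = ρ 0 0 • Matrix.single 0 0 1) ∧
    unitarity A Ezero = 0 ∧ unitarity A Fhalf = 0 ∧
    unitarity A (Ezero ∘ₗ Fhalf) = 1 / 12 := by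
  have htraceless : ∀ k ∈ Finset.univ.filter (fun k : Fin (2 ^ 2) => (k : ℕ) ≠ 0),
      trace (A k) = 0 := fun k hk =>
    trace_eq_zero_of_val_ne_zero horth hA0 (Finset.mem_filter.mp hk).2
  refine ⟨Ezero_comp_Fhalf_apply, ?_, ?_, ?_⟩
  · rw [unitarity_of_forall_eq_smul Ezero_apply,
      Finset.sum_eq_zero (f := fun l => ‖trace (A l)‖ ^ 2) fun l hl => by simp [htraceless l hl]]
    simp
  · rw [unitarity_of_forall_eq_smul Fhalf_apply,
      Finset.sum_eq_zero fun k hk => by simp [trace_smul, htraceless k hk]]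
    simp
  · simp only [unitarity_of_forall_eq_smul Ezero_comp_Fhalf_apply,
      trace_conjTranspose_mul_single_one, norm_star,
      sum_filter_norm_sq_apply_zero_zero horth hA0 hspan]
    norm_num
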